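/- arXiv:1301.5584 — 3 statements merged into one kernel-verified Lean document; each statement's English description precedes it below -/
import Mathlib

section
/- Let f₁, f₂, …, f_k : V → ℝ be k nonzero disjointly supported functions, where 1 ≤ k ≤ n. Then λ_k ≤ 2 · max_{1≤i≤k} R(f_i). -/
open scoped Classical

namespace CheegerHigher

noncomputable section

variable {n : ℕ}

/-- Weighted degree of a vertex: `w(v) = ∑_u w(v,u)`. -/
def deg (w : Fin n → Fin n → ℝ) (v : Fin n) : ℝ := ∑ u, w v u

/-- Volume of a vertex set. -/
def vol (w : Fin n → Fin n → ℝ) (S : Finset (Fin n)) : ℝ := ∑ v ∈ S, deg w v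

/-- Total weight of (ordered) pairs from `S` to `T`; for disjoint `S`, `T` this is `w(E(S,T))`. -/
def cutWeight (w : Fin n → Fin n → ℝ) (S T : Finset (Fin n)) : ℝ :=
  ∑ u ∈ S, ∑ v ∈ T, w u v

/-- Total edge weight `w(E)` (each unordered edge counted once). -/
def totalWeight (w : Fin n → Fin n → ℝ) : ℝ := (1 / 2 : ℝ) * ∑ u, ∑ v, w u v

/-- Conductance of a set `S`. -/
noncomputable def conductance (w : Fin n → Fin n → ℝ) (S : Finset (Fin n)) : ℝ :=
  cutWeight w S Sᶜ / min (vol w S) (vol w Sᶜ)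

/-- Conductance of the graph: minimum over nonempty proper subsets. -/
noncomputable def minConductance (w : Fin n → Fin n → ℝ) : ℝ :=
  sInf { x | ∃ S : Finset (Fin n), S.Nonempty ∧ S ≠ Finset.univ ∧ x = conductance w S }

/-- `k`-way expansion: min over `k` pairwise disjoint nonempty subsets of the max conductance. -/
noncomputable def multiwayExpansion (w : Fin n → Fin n → ℝ) (k : ℕ) : ℝ :=
  sInf { x | ∃ S : Fin k → Finset (Fin n), (∀ i, (S i).Nonempty) ∧
      (∀ i j, i ≠ j → Disjoint (S i) (S j)) ∧ x = ⨆ i, conductance w (S i) }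

/-- `‖f‖_w²  = ∑_v w(v) f(v)²`. -/
def normWsq (w : Fin n → Fin n → ℝ) (f : Fin n → ℝ) : ℝ := ∑ v, deg w v * f v ^ 2

/-- Dirichlet energy `∑_{{u,v} ∈ E} w(u,v) (f(u)-f(v))²` (each unordered edge once). -/
def energy (w : Fin n → Fin n → ℝ) (f : Fin n → ℝ) : ℝ :=
  (1 / 2 : ℝ) * ∑ u, ∑ v, w u v * (f u - f v) ^ 2

/-- Rayleigh quotient of `f`. -/
noncomputable def rayleigh (w : Fin n → Fin n → ℝ) (f : Fin n → ℝ) : ℝ :=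
  energy w f / normWsq w f

/-- Signless energy `∑_{{u,v} ∈ E} w(u,v) (f(u)+f(v))²`. -/
def signEnergy (w : Fin n → Fin n → ℝ) (f : Fin n → ℝ) : ℝ :=
  (1 / 2 : ℝ) * ∑ u, ∑ v, w u v * (f u + f v) ^ 2

/-- Signless Rayleigh quotient `R⁺(f)`. -/
noncomputable def rayleighP (w : Fin n → Fin n → ℝ) (f : Fin n → ℝ) : ℝ :=
  signEnergy w f / normWsq w f

/-- Normalized Laplacian `𝓛 = I - D^{-1/2} A D^{-1/2}`. -/
noncomputable def normLap (w : Fin n → Fin n → ℝ) : Matrix (Fin n) (Fin n) ℝ :=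
  Matrix.of fun u v =>
    (if u = v then (1 : ℝ) else 0) - w u v / (Real.sqrt (deg w u) * Real.sqrt (deg w v))

/-- Signless normalized Laplacian `𝓜 = I + D^{-1/2} A D^{-1/2}`. -/
noncomputable def signLap (w : Fin n → Fin n → ℝ) : Matrix (Fin n) (Fin n) ℝ :=
  Matrix.of fun u v =>
    (if u = v then (1 : ℝ) else 0) + w u v / (Real.sqrt (deg w u) * Real.sqrt (deg w v))

/-- The `k`-th smallest eigenvalue of a Hermitian matrix (1-based index `k`). -/
noncomputable def sortedEig {A : Matrix (Fin n) (Fin n) ℝ} (hA : A.IsHermitian) (k : ℕ) : ℝ :=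
  if h : k - 1 < n then hA.eigenvalues (Tuple.sort hA.eigenvalues ⟨k - 1, h⟩) else 0

/-- Threshold set `V_f(t) = {v : f(v) ≥ t}`. -/
noncomputable def thresholdSet (f : Fin n → ℝ) (t : ℝ) : Finset (Fin n) :=
  Finset.univ.filter fun v => t ≤ f v

/-- `φ(f)`: best conductance among threshold sets of `f` that are nonempty and proper. -/
noncomputable def phiF (w : Fin n → Fin n → ℝ) (f : Fin n → ℝ) : ℝ :=
  sInf { x | ∃ t : ℝ, (thresholdSet f t).Nonempty ∧ thresholdSet f t ≠ Finset.univ ∧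
      x = conductance w (thresholdSet f t) }

/-- Support of a function, as a finset. -/
noncomputable def supp (f : Fin n → ℝ) : Finset (Fin n) :=
  Finset.univ.filter fun v => f v ≠ 0

/-- `L_f(t) = {v : f(v) ≤ -t}`. -/
noncomputable def Lset (f : Fin n → ℝ) (t : ℝ) : Finset (Fin n) :=
  Finset.univ.filter fun v => f v ≤ -t

/-- `R_f(t) = {v : f(v) ≥ t}`. -/
noncomputable def Rset (f : Fin n → ℝ) (t : ℝ) : Finset (Fin n) :=
  Finset.univ.filter fun v => t ≤ f v

/-- Bipartiteness ratio of an induced cut `(L,R)` (for disjoint `L`, `R`). -/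
noncomputable def biRatio (w : Fin n → Fin n → ℝ) (L R : Finset (Fin n)) : ℝ :=
  (cutWeight w L L + cutWeight w R R + cutWeight w (L ∪ R) (L ∪ R)ᶜ) / vol w (L ∪ R)

/-- `β(f)`: best bipartiteness ratio among threshold cuts of `f`. -/
noncomputable def betaF (w : Fin n → Fin n → ℝ) (f : Fin n → ℝ) : ℝ :=
  sInf { x | ∃ t : ℝ, 0 < t ∧ (Lset f t ∪ Rset f t).Nonempty ∧
      x = biRatio w (Lset f t) (Rset f t) }

/-- `β(G)`: minimum bipartiteness ratio over all induced cuts. -/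
noncomputable def minBeta (w : Fin n → Fin n → ℝ) : ℝ :=
  sInf { x | ∃ L R : Finset (Fin n), Disjoint L R ∧ (L ∪ R).Nonempty ∧ x = biRatio w L R }

/-- Energy of `f` restricted to the interval `(b,a]`:
`∑_{{u,v} ∈ E} w(u,v) · len((b,a] ∩ [f(u),f(v)])²`. -/
def intervalEnergy (w : Fin n → Fin n → ℝ) (f : Fin n → ℝ) (b a : ℝ) : ℝ :=
  (1 / 2 : ℝ) * ∑ u, ∑ v,
    w u v * max 0 (min a (max (f u) (f v)) - max b (min (f u) (f v))) ^ 2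

/-- The relative distance `dist(x,R) = inf_{y ∈ R} |x-y|/y` from a point to a region. -/
noncomputable def regionDist (x : ℝ) (R : Set ℝ) : ℝ :=
  sInf ((fun y => |x - y| / y) '' R)

/-- `g` is a `(2k+1)`-step approximation of `f`: there are thresholds
`0 = t₀ ≤ t₁ ≤ … ≤ t_{2k}` and `g(v)` is a threshold closest to `f(v)`. -/
def IsStepApprox (f g : Fin n → ℝ) (k : ℕ) : Prop :=
  ∃ t : Fin (2 * k + 1) → ℝ, t 0 = 0 ∧ Monotone t ∧
    ∀ v, (∃ i, g v = t i) ∧ ∀ i, |f v - g v| ≤ |f v - t i|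

/-- `g` is a symmetric `(2k+1)`-step approximation of `f`: there are thresholds
`0 = t₀ ≤ t₁ ≤ … ≤ t_{2k}` and `g(v)` is a value among `{±t_i}` closest to `f(v)`. -/
def IsSymStepApprox (f g : Fin n → ℝ) (k : ℕ) : Prop :=
  ∃ t : Fin (2 * k + 1) → ℝ, t 0 = 0 ∧ Monotone t ∧
    ∀ v, (∃ i, g v = t i ∨ g v = -t i) ∧
      ∀ i, |f v - g v| ≤ |f v - t i| ∧ |f v - g v| ≤ |f v + t i|

/-- Edge weights of the induced subgraph on `U`. -/
def inducedW (w : Fin n → Fin n → ℝ) (U : Finset (Fin n)) : Fin n → Fin n → ℝ :=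
  fun u v => if u ∈ U ∧ v ∈ U then w u v else 0

/-- Uncutness `γ(L,R) = w(E(L)) + w(E(R)) + w(E(L∪R, complement))`. -/
noncomputable def uncut (w : Fin n → Fin n → ℝ) (L R : Finset (Fin n)) : ℝ :=
  (1 / 2 : ℝ) * cutWeight w L L + (1 / 2 : ℝ) * cutWeight w R R +
    cutWeight w (L ∪ R) (L ∪ R)ᶜ

/-!
By the easy half of the Courant–Fischer theorem, every `k`-dimensional subspace contains a nonzero
`g` with `λ_k ‖g‖² ≤ ⟪g, 𝓛 g⟫`. Apply it to the span of the `D^{1/2} F_i`, which are linearly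
independent since their supports are disjoint, and write `g = D^{1/2} f` with `f = ∑ c_i F_i`;
then `⟪g, 𝓛 g⟫` is the energy of `f` and `‖g‖² = ‖f‖_w²`. Disjointness gives
`‖f‖_w² = ∑ c_i² ‖F_i‖_w²`, and since at most two of the `F_i` are nonzero at the ends of an edge,
Cauchy–Schwarz gives `energy f ≤ 2 ∑ c_i² energy F_i ≤ 2 (max_i R(F_i)) ‖f‖_w²`.
-/

open Matrix Module

section DisjointSupport

variable {ι : Type*} [Fintype ι]

lemma sq_sum_eq_sum_sq_of_pairwise {R : Type*} [CommSemiring R] {a : ι → R}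
    (ha : Pairwise fun i j => a i = 0 ∨ a j = 0) : (∑ i, a i) ^ 2 = ∑ i, a i ^ 2 := by
  rw [sq, Finset.sum_mul_sum]
  refine Finset.sum_congr rfl fun i _ => ?_
  rw [Finset.sum_eq_single i (fun j _ hji => ?_) (by simp), sq]
  rcases ha hji.symm with h | h <;> simp [h]

lemma card_filter_ne_zero_le_one {R : Type*} [Zero R] {a : ι → R}
    (ha : Pairwise fun i j => a i = 0 ∨ a j = 0) :
    (Finset.univ.filter fun i => a i ≠ 0).card ≤ 1 := by
  refine Finset.card_le_one.mpr fun i hi j hj => ?_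
  by_contra hij
  simp only [Finset.mem_filter] at hi hj
  exact (ha hij).elim hi.2 hj.2

/-- Two vectors with at most one nonzero coordinate each differ in at most two coordinates, so
this is Cauchy–Schwarz on those two coordinates. -/
lemma sq_sum_sub_sum_le_of_pairwise {a b : ι → ℝ}
    (ha : Pairwise fun i j => a i = 0 ∨ a j = 0) (hb : Pairwise fun i j => b i = 0 ∨ b j = 0) :
    (∑ i, a i - ∑ i, b i) ^ 2 ≤ 2 * ∑ i, (a i - b i) ^ 2 := by
  set s := (Finset.univ.filter fun i => a i ≠ 0) ∪ Finset.univ.filter fun i => b i ≠ 0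
  have hs : (s.card : ℝ) ≤ 2 := by
    have := (Finset.card_union_le _ _).trans
      (add_le_add (card_filter_ne_zero_le_one ha) (card_filter_ne_zero_le_one hb))
    exact_mod_cast this
  have hsub : ∑ i, (a i - b i) = ∑ i ∈ s, (a i - b i) := by
    refine (Finset.sum_subset (Finset.subset_univ s) fun i _ hi => ?_).symm
    simp only [s, Finset.mem_union, Finset.mem_filter, Finset.mem_univ, true_and, not_or,
      not_not] at hi
    rw [hi.1, hi.2, sub_zero]
  calc (∑ i, a i - ∑ i, b i) ^ 2 = (∑ i ∈ s, (a i - b i)) ^ 2 := by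
        rw [← Finset.sum_sub_distrib, hsub]
    _ ≤ s.card * ∑ i ∈ s, (a i - b i) ^ 2 := sq_sum_le_card_mul_sum_sq
    _ ≤ 2 * ∑ i, (a i - b i) ^ 2 := by
        refine mul_le_mul hs ?_ (Finset.sum_nonneg fun i _ => sq_nonneg _) zero_le_two
        exact Finset.sum_le_sum_of_subset_of_nonneg (Finset.subset_univ s) fun i _ _ => sq_nonneg _

lemma linearIndependent_of_pairwise {K α : Type*} [Field K] {F : ι → α → K}
    (hF0 : ∀ i, F i ≠ 0) (hF : Pairwise fun i j => ∀ v, F i v = 0 ∨ F j v = 0) :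
    LinearIndependent K F := by
  refine Fintype.linearIndependent_iff.mpr fun c hc i => ?_
  obtain ⟨v, hv⟩ := Function.ne_iff.mp (hF0 i)
  have hsum := congrFun hc v
  simp only [Finset.sum_apply, Pi.smul_apply, smul_eq_mul, Pi.zero_apply] at hsum
  rw [Finset.sum_eq_single i (fun j _ hji => ?_) (by simp)] at hsum
  · exact (mul_eq_zero.mp hsum).resolve_right hv
  · rw [(hF hji v).resolve_right hv, mul_zero]

end DisjointSupport

section CourantFischer

variable {A : Matrix (Fin n) (Fin n) ℝ} (hA : A.IsHermitian)

lemma dotProduct_eq_sum_eigenvectorBasis (x y : Fin n → ℝ) :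
    x ⬝ᵥ y = ∑ i, (⇑(hA.eigenvectorBasis i) ⬝ᵥ x) * (⇑(hA.eigenvectorBasis i) ⬝ᵥ y) := by
  have h := hA.eigenvectorBasis.sum_inner_mul_inner (WithLp.toLp 2 x) (WithLp.toLp 2 y)
  simp only [EuclideanSpace.inner_eq_star_dotProduct, star_trivial] at h
  simpa only [dotProduct_comm] using h.symm

lemma eigenvectorBasis_dotProduct_mulVec (i : Fin n) (x : Fin n → ℝ) :
    ⇑(hA.eigenvectorBasis i) ⬝ᵥ A *ᵥ x = hA.eigenvalues i * (⇑(hA.eigenvectorBasis i) ⬝ᵥ x) := by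
  have hT : Aᵀ = A := by simpa [conjTranspose_eq_transpose_of_trivial] using hA.eq
  rw [dotProduct_mulVec, ← mulVec_transpose, hT, hA.mulVec_eigenvectorBasis, smul_dotProduct,
    smul_eq_mul]

lemma mul_dotProduct_self_le_of_eigenvalues_lt {c : ℝ} {x : Fin n → ℝ}
    (hx : ∀ i, hA.eigenvalues i < c → ⇑(hA.eigenvectorBasis i) ⬝ᵥ x = 0) :
    c * (x ⬝ᵥ x) ≤ x ⬝ᵥ A *ᵥ x := by
  rw [dotProduct_eq_sum_eigenvectorBasis hA x x, dotProduct_eq_sum_eigenvectorBasis hA x,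
    Finset.mul_sum]
  refine Finset.sum_le_sum fun i _ => ?_
  rw [eigenvectorBasis_dotProduct_mulVec]
  by_cases hi : hA.eigenvalues i < c
  · simp [hx i hi]
  · calc c * ((⇑(hA.eigenvectorBasis i) ⬝ᵥ x) * (⇑(hA.eigenvectorBasis i) ⬝ᵥ x))
        ≤ hA.eigenvalues i * ((⇑(hA.eigenvectorBasis i) ⬝ᵥ x) * (⇑(hA.eigenvectorBasis i) ⬝ᵥ x)) :=
          mul_le_mul_of_nonneg_right (not_lt.mp hi) (mul_self_nonneg _)
      _ = _ := by ring

/-- The easy half of the Courant–Fischer theorem. -/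
lemma exists_mem_ne_zero_sortedEig_mul_le {k : ℕ} (hk : 1 ≤ k) (W : Submodule ℝ (Fin n → ℝ))
    (hW : k ≤ finrank ℝ W) :
    ∃ x ∈ W, x ≠ 0 ∧ sortedEig hA k * (x ⬝ᵥ x) ≤ x ⬝ᵥ A *ᵥ x := by
  have hkn : k - 1 < n := by
    have := Submodule.finrank_le W
    rw [finrank_fin_fun] at this
    omega
  -- the eigenvectors of the `k - 1` smallest eigenvalues, as the rows of a matrix
  let P : Matrix (Fin (k - 1)) (Fin n) ℝ :=
    of fun j => ⇑(hA.eigenvectorBasis (Tuple.sort hA.eigenvalues (Fin.castLT j (by omega))))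
  have hker : LinearMap.ker (P.mulVecLin.domRestrict W) ≠ ⊥ :=
    LinearMap.ker_ne_bot_of_finrank_lt (by rw [finrank_fin_fun]; omega)
  obtain ⟨⟨x, hxW⟩, hPx, hx0⟩ := Submodule.exists_mem_ne_zero_of_ne_bot hker
  refine ⟨x, hxW, fun h => hx0 (Subtype.ext h), ?_⟩
  refine mul_dotProduct_self_le_of_eigenvalues_lt hA fun i hi => ?_
  obtain ⟨j, rfl⟩ := (Tuple.sort hA.eigenvalues).surjective i
  have hj : j < ⟨k - 1, hkn⟩ := by
    by_contra hle
    have := Tuple.monotone_sort hA.eigenvalues (not_lt.mp hle)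
    simp only [sortedEig, dif_pos hkn, Function.comp_apply] at hi this
    linarith
  simpa [P, mulVec] using congrFun hPx ⟨j, hj⟩

end CourantFischer

/-- The operator `D^{1/2}`. -/
def sqrtDegMul (w : Fin n → Fin n → ℝ) : (Fin n → ℝ) →ₗ[ℝ] Fin n → ℝ :=
  (diagonal fun v => √(deg w v)).mulVecLin

@[simp]
lemma sqrtDegMul_apply (w : Fin n → Fin n → ℝ) (f : Fin n → ℝ) (v : Fin n) :
    sqrtDegMul w f v = √(deg w v) * f v := by
  simp [sqrtDegMul, mulVec_diagonal]

section Graph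

variable {ι : Type*} [Fintype ι] {w : Fin n → Fin n → ℝ}

lemma ker_sqrtDegMul (hdeg : ∀ v, 0 < deg w v) : LinearMap.ker (sqrtDegMul w) = ⊥ := by
  refine LinearMap.ker_eq_bot'.mpr fun f hf => funext fun v => ?_
  have := congrFun hf v
  rw [sqrtDegMul_apply, Pi.zero_apply, mul_eq_zero] at this
  exact this.resolve_left (Real.sqrt_pos.mpr (hdeg v)).ne'

lemma normWsq_pos (hdeg : ∀ v, 0 < deg w v) {f : Fin n → ℝ} (hf : f ≠ 0) : 0 < normWsq w f := by
  obtain ⟨v, hv⟩ := Function.ne_iff.mp hf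
  exact Finset.sum_pos' (fun u _ => mul_nonneg (hdeg u).le (sq_nonneg _))
    ⟨v, Finset.mem_univ v, mul_pos (hdeg v) (pow_two_pos_of_ne_zero hv)⟩

lemma sqrtDegMul_dotProduct_self (hdeg : ∀ v, 0 ≤ deg w v) (f : Fin n → ℝ) :
    sqrtDegMul w f ⬝ᵥ sqrtDegMul w f = normWsq w f := by
  refine Finset.sum_congr rfl fun v _ => ?_
  rw [sqrtDegMul_apply, mul_mul_mul_comm, Real.mul_self_sqrt (hdeg v), sq]

lemma energy_eq_normWsq_sub (hsym : ∀ u v, w u v = w v u) (f : Fin n → ℝ) :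
    energy w f = normWsq w f - ∑ u, ∑ v, w u v * f u * f v := by
  have hswap : ∑ u, ∑ v, w u v * f v ^ 2 = normWsq w f := by
    rw [Finset.sum_comm]
    refine Finset.sum_congr rfl fun v _ => ?_
    simp only [deg, Finset.sum_mul, hsym v]
  have hexp : ∑ u, ∑ v, w u v * (f u - f v) ^ 2 = ∑ u, ∑ v, w u v * f u ^ 2
      + ∑ u, ∑ v, w u v * f v ^ 2 - 2 * ∑ u, ∑ v, w u v * f u * f v := by
    simp only [Finset.mul_sum, ← Finset.sum_add_distrib, ← Finset.sum_sub_distrib]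
    exact Finset.sum_congr rfl fun u _ => Finset.sum_congr rfl fun v _ => by ring
  have hdeg : ∑ u, ∑ v, w u v * f u ^ 2 = normWsq w f := by
    simp only [normWsq, deg, Finset.sum_mul]
  rw [energy, hexp, hswap, hdeg]
  ring

lemma sqrtDegMul_dotProduct_normLap_mulVec (hsym : ∀ u v, w u v = w v u)
    (hdeg : ∀ v, 0 < deg w v) (f : Fin n → ℝ) :
    sqrtDegMul w f ⬝ᵥ normLap w *ᵥ sqrtDegMul w f = energy w f := by
  rw [energy_eq_normWsq_sub hsym]
  have hs : ∀ v, √(deg w v) ≠ 0 := fun v => (Real.sqrt_pos.mpr (hdeg v)).ne'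
  have hentry : ∀ u v, √(deg w u) * f u * (normLap w u v * (√(deg w v) * f v))
      = (if u = v then deg w u * f u ^ 2 else 0) - w u v * f u * f v := by
    intro u v
    have hcancel : √(deg w u) * f u * (w u v / (√(deg w u) * √(deg w v)) * (√(deg w v) * f v))
        = w u v * f u * f v := by
      field_simp [hs u, hs v]
    simp only [normLap, of_apply, sub_mul, mul_sub, hcancel]
    split_ifs with h
    · subst h
      linear_combination f u ^ 2 * Real.mul_self_sqrt (hdeg u).le
    · ring
  simp only [dotProduct, mulVec, sqrtDegMul_apply, Finset.mul_sum, hentry,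
    Finset.sum_sub_distrib, Finset.sum_ite_eq, Finset.mem_univ, if_true]
  rfl

lemma normWsq_smul (c : ℝ) (f : Fin n → ℝ) : normWsq w (c • f) = c ^ 2 * normWsq w f := by
  simp only [normWsq, Finset.mul_sum, Pi.smul_apply, smul_eq_mul]
  exact Finset.sum_congr rfl fun v _ => by ring

lemma energy_smul (c : ℝ) (f : Fin n → ℝ) : energy w (c • f) = c ^ 2 * energy w f := by
  simp only [energy, Finset.mul_sum, Pi.smul_apply, smul_eq_mul]
  exact Finset.sum_congr rfl fun u _ => Finset.sum_congr rfl fun v _ => by ring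

lemma normWsq_sum_of_pairwise {F : ι → Fin n → ℝ}
    (hF : Pairwise fun i j => ∀ v, F i v = 0 ∨ F j v = 0) :
    normWsq w (∑ i, F i) = ∑ i, normWsq w (F i) := by
  simp only [normWsq, Finset.sum_apply, sq_sum_eq_sum_sq_of_pairwise (hF.mono fun _ _ h => h _),
    Finset.mul_sum]
  exact Finset.sum_comm

lemma energy_sum_le_of_pairwise (hnn : ∀ u v, 0 ≤ w u v) {F : ι → Fin n → ℝ}
    (hF : Pairwise fun i j => ∀ v, F i v = 0 ∨ F j v = 0) :
    energy w (∑ i, F i) ≤ 2 * ∑ i, energy w (F i) := by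
  have hpt : ∀ u v, w u v * ((∑ i, F i) u - (∑ i, F i) v) ^ 2
      ≤ 2 * ∑ i, w u v * (F i u - F i v) ^ 2 := fun u v => by
    rw [Finset.sum_apply, Finset.sum_apply, ← Finset.mul_sum, mul_left_comm]
    exact mul_le_mul_of_nonneg_left
      (sq_sum_sub_sum_le_of_pairwise (hF.mono fun _ _ h => h u) (hF.mono fun _ _ h => h v))
      (hnn u v)
  calc energy w (∑ i, F i)
      ≤ 1 / 2 * ∑ u, ∑ v, 2 * ∑ i, w u v * (F i u - F i v) ^ 2 :=
        mul_le_mul_of_nonneg_left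
          (Finset.sum_le_sum fun u _ => Finset.sum_le_sum fun v _ => hpt u v) (by norm_num)
    _ = 2 * ∑ i, energy w (F i) := by
        simp only [energy, Finset.mul_sum]
        rw [Finset.sum_congr rfl fun u _ => Finset.sum_comm, Finset.sum_comm]
        exact Finset.sum_congr rfl fun i _ => Finset.sum_congr rfl fun u _ =>
          Finset.sum_congr rfl fun v _ => by ring

lemma energy_sum_smul_le (hnn : ∀ u v, 0 ≤ w u v) {F : ι → Fin n → ℝ}
    (hF : Pairwise fun i j => ∀ v, F i v = 0 ∨ F j v = 0) {M : ℝ}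
    (hM : ∀ i, energy w (F i) ≤ M * normWsq w (F i)) (c : ι → ℝ) :
    energy w (∑ i, c i • F i) ≤ 2 * M * normWsq w (∑ i, c i • F i) := by
  have hcF : Pairwise fun i j => ∀ v, (c i • F i) v = 0 ∨ (c j • F j) v = 0 :=
    hF.mono fun i j h v => (h v).imp (fun h => by simp [h]) (fun h => by simp [h])
  calc energy w (∑ i, c i • F i) ≤ 2 * ∑ i, c i ^ 2 * energy w (F i) := by
        simpa only [energy_smul] using energy_sum_le_of_pairwise hnn hcF
    _ ≤ 2 * ∑ i, c i ^ 2 * (M * normWsq w (F i)) := by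
        gcongr with i
        exact hM i
    _ = 2 * M * normWsq w (∑ i, c i • F i) := by
        simp only [normWsq_sum_of_pairwise hcF, normWsq_smul, Finset.mul_sum]
        exact Finset.sum_congr rfl fun i _ => by ring

end Graph

theorem lam_le_two_max_rayleigh_general
    (w : Fin n → Fin n → ℝ)
    (hsym : ∀ u v, w u v = w v u) (hnn : ∀ u v, 0 ≤ w u v)
    (hdeg : ∀ v, 1 ≤ deg w v)
    (hH : (normLap w).IsHermitian)
    (k : ℕ) (hk1 : 1 ≤ k)
    (F : Fin k → Fin n → ℝ) (hF0 : ∀ i, F i ≠ 0)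
    (hdisj : ∀ i j, i ≠ j → ∀ v, F i v = 0 ∨ F j v = 0) :
    sortedEig hH k ≤ 2 * ⨆ i, rayleigh w (F i) := by
  have hdeg_pos : ∀ v, 0 < deg w v := fun v => one_pos.trans_le (hdeg v)
  have hM : ∀ i, energy w (F i) ≤ (⨆ i, rayleigh w (F i)) * normWsq w (F i) := fun i =>
    (div_le_iff₀ (normWsq_pos hdeg_pos (hF0 i))).mp
      (le_ciSup (f := fun i => rayleigh w (F i)) (Set.finite_range _).bddAbove i)
  have hG : LinearIndependent ℝ (sqrtDegMul w ∘ F) :=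
    (linearIndependent_of_pairwise hF0 hdisj).map' _ (ker_sqrtDegMul hdeg_pos)
  obtain ⟨g, hgW, hg0, hg⟩ := exists_mem_ne_zero_sortedEig_mul_le hH hk1
    (Submodule.span ℝ (Set.range (sqrtDegMul w ∘ F)))
    (by rw [finrank_span_eq_card hG, Fintype.card_fin])
  obtain ⟨c, rfl⟩ := (Submodule.mem_span_range_iff_exists_fun ℝ).mp hgW
  have hgf : ∑ i, c i • (sqrtDegMul w ∘ F) i = sqrtDegMul w (∑ i, c i • F i) := by
    simp only [Function.comp_apply, map_sum, map_smul]
  rw [hgf] at hg0 hg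
  rw [sqrtDegMul_dotProduct_self (fun v => (hdeg_pos v).le),
    sqrtDegMul_dotProduct_normLap_mulVec hsym hdeg_pos] at hg
  have hf0 : ∑ i, c i • F i ≠ 0 := fun h => hg0 (by rw [h, map_zero])
  exact le_of_mul_le_mul_right (hg.trans (energy_sum_smul_le hnn hdisj hM c))
    (normWsq_pos hdeg_pos hf0)

/-- For `k` disjointly supported nonzero functions,
`λ_k ≤ 2 · max_i R(f_i)`. -/
theorem lam_le_two_max_rayleigh
    (hn : 2 ≤ n) (w : Fin n → Fin n → ℝ)
    (hsym : ∀ u v, w u v = w v u) (hnn : ∀ u v, 0 ≤ w u v)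
    (hloop : ∀ v, w v v = 0) (hdeg : ∀ v, 1 ≤ deg w v)
    (hH : (normLap w).IsHermitian)
    (k : ℕ) (hk1 : 1 ≤ k) (hkn : k ≤ n)
    (F : Fin k → Fin n → ℝ) (hF0 : ∀ i, F i ≠ 0)
    (hdisj : ∀ i j, i ≠ j → ∀ v, F i v = 0 ∨ F j v = 0) :
    sortedEig hH k ≤ 2 * ⨆ i, rayleigh w (F i) :=
  lam_le_two_max_rayleigh_general w hsym hnn hdeg hH k hk1 F hF0 hdisj

end

end CheegerHigher
end

section
/- Let f : V → ℝ be nonnegative with vol(supp(f)) ≤ vol(V)/2, and let I = [b, a] be an interval with a > b ≥ 0 and vol_f(a) > 0. Then 𝓔_f(I) ≥ φ(f)² · vol_f(a)² · len(I)² / (φ(f) · vol_f(a) + vol_f(I)). -/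
open scoped Classical

namespace CheegerHigher

noncomputable section

variable {n : ℕ}

/-!
For every level `t ∈ (b, a]` the threshold set `V_f(t)` contains `V_f(a)` and lies in `supp f`,
so its cut weighs at least `φ(f) vol_f(a)`. Integrating over `I` (coarea formula) gives
`T := Σ_e w_e len(I ∩ e) ≥ φ(f) vol_f(a) len(I)`, and Cauchy–Schwarz gives `T² ≤ 𝓔_f(I) W`,
where `W` is the weight of the edges whose interval meets `I`. Such an edge either has an
endpoint in `I`, and these weigh at most `vol_f(I)`, or jumps over `I`, and then contributes
`len(I)²` to the energy. Comparing the weight of the jumping edges with `φ(f) vol_f(a)` concludes.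
-/

open MeasureTheory

/-- The length of `(b, a] ∩ (x, y]`. -/
def overlap (b a x y : ℝ) : ℝ := max 0 (min a y - max b x)

lemma overlap_eq_zero_of_le {b a x y : ℝ} (h : y ≤ x) : overlap b a x y = 0 :=
  max_eq_left (sub_nonpos.mpr ((min_le_right a y).trans (h.trans (le_max_right b x))))

lemma overlap_add_overlap_swap (b a x y : ℝ) :
    overlap b a x y + overlap b a y x = overlap b a (min x y) (max x y) := by
  rcases le_total x y with h | h
  · rw [overlap_eq_zero_of_le h, min_eq_left h, max_eq_right h, add_zero]
  · rw [overlap_eq_zero_of_le h, min_eq_right h, max_eq_left h, zero_add]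

lemma overlap_eq_sub {b a x y : ℝ} (hba : b ≤ a) (hx : x ≤ b) (hy : a < y) :
    overlap b a x y = a - b := by
  rw [overlap, min_eq_left hy.le, max_eq_left hx, max_eq_right (sub_nonneg.mpr hba)]

lemma mem_Ioc_or_mem_Ioc_or_of_overlap_ne_zero {b a x y : ℝ} (h : overlap b a x y ≠ 0) :
    x ∈ Set.Ioc b a ∨ y ∈ Set.Ioc b a ∨ (x ≤ b ∧ a < y) := by
  have hlt : max b x < min a y := by
    by_contra! hle
    exact h (max_eq_left (sub_nonpos.mpr hle))
  have hxa : x < a := (le_max_right b x).trans_lt (hlt.trans_le (min_le_left a y))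
  have hby : b < y := (le_max_left b x).trans_lt (hlt.trans_le (min_le_right a y))
  by_cases hbx : b < x
  · exact Or.inl ⟨hbx, hxa.le⟩
  by_cases hya : y ≤ a
  · exact Or.inr (Or.inl ⟨hby, hya⟩)
  · exact Or.inr (Or.inr ⟨not_lt.mp hbx, not_le.mp hya⟩)

lemma integrable_indicator_one_Ioc (b a x y : ℝ) :
    Integrable ((Set.Ioc x y).indicator (1 : ℝ → ℝ)) (volume.restrict (Set.Ioc b a)) :=
  (integrable_const (1 : ℝ)).indicator measurableSet_Ioc

lemma setIntegral_indicator_one_Ioc (b a x y : ℝ) :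
    ∫ t in Set.Ioc b a, (Set.Ioc x y).indicator 1 t = overlap b a x y := by
  rw [integral_indicator_one measurableSet_Ioc, measureReal_restrict_apply measurableSet_Ioc,
    Set.Ioc_inter_Ioc, Real.volume_real_Ioc, overlap, max_comm, max_comm x b, min_comm y a]

lemma le_ite_add_ite_add_ite {p q r : Prop} [Decidable p] [Decidable q] [Decidable r] {x : ℝ}
    (hx : 0 ≤ x) (h : p ∨ q ∨ r) :
    x ≤ (if p then x else 0) + (if q then x else 0) + if r then x else 0 := by
  rcases h with h | h | h <;> simp only [h, if_true] <;> split_ifs <;> linarith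

lemma sq_sum_mul_le_sum_mul_sq_mul_sum {ι : Type*} (s : Finset ι) {w x : ι → ℝ}
    (hw : ∀ i ∈ s, 0 ≤ w i) :
    (∑ i ∈ s, w i * x i) ^ 2 ≤ (∑ i ∈ s, w i * x i ^ 2) * ∑ i ∈ s with x i ≠ 0, w i := by
  rw [Finset.sum_filter]
  refine Finset.sum_sq_le_sum_mul_sum_of_sq_le_mul s
    (fun i hi => mul_nonneg (hw i hi) (sq_nonneg _))
    (fun i hi => by split_ifs <;> simp [hw i hi]) fun i _ => ?_
  split_ifs with hx
  · exact (by ring : (w i * x i) ^ 2 = w i * x i ^ 2 * w i).le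
  · simp [not_not.mp hx]

lemma sum_sum_mul_swap {ι : Type*} [Fintype ι] {w : ι → ι → ℝ} (hsym : ∀ u v, w u v = w v u)
    (g : ι → ι → ℝ) : ∑ u, ∑ v, w u v * g v u = ∑ u, ∑ v, w u v * g u v := by
  rw [Finset.sum_comm]
  exact Finset.sum_congr rfl fun u _ => Finset.sum_congr rfl fun v _ => by rw [hsym]

section ThresholdCuts

variable {w : Fin n → Fin n → ℝ}

lemma deg_nonneg (hnn : ∀ u v, 0 ≤ w u v) (v : Fin n) : 0 ≤ deg w v :=
  Finset.sum_nonneg fun u _ => hnn v u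

lemma vol_nonneg (hnn : ∀ u v, 0 ≤ w u v) (S : Finset (Fin n)) : 0 ≤ vol w S :=
  Finset.sum_nonneg fun v _ => deg_nonneg hnn v

lemma vol_mono (hnn : ∀ u v, 0 ≤ w u v) {S T : Finset (Fin n)} (h : S ⊆ T) :
    vol w S ≤ vol w T :=
  Finset.sum_le_sum_of_subset_of_nonneg h fun v _ _ => deg_nonneg hnn v

lemma vol_add_vol_compl (S : Finset (Fin n)) : vol w S + vol w Sᶜ = vol w Finset.univ :=
  Finset.sum_add_sum_compl S _

lemma cutWeight_nonneg (hnn : ∀ u v, 0 ≤ w u v) (S T : Finset (Fin n)) : 0 ≤ cutWeight w S T :=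
  Finset.sum_nonneg fun u _ => Finset.sum_nonneg fun v _ => hnn u v

lemma conductance_nonneg (hnn : ∀ u v, 0 ≤ w u v) (S : Finset (Fin n)) :
    0 ≤ conductance w S :=
  div_nonneg (cutWeight_nonneg hnn _ _) (le_min (vol_nonneg hnn _) (vol_nonneg hnn _))

variable (f : Fin n → ℝ)

lemma phiF_nonneg (hnn : ∀ u v, 0 ≤ w u v) : 0 ≤ phiF w f :=
  Real.sInf_nonneg fun _ ⟨_, _, _, hx⟩ => hx ▸ conductance_nonneg hnn _

lemma thresholdSet_anti : Antitone (thresholdSet f) := fun _ _ hst _ hv => by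
  simp only [thresholdSet, Finset.mem_filter, Finset.mem_univ, true_and] at hv ⊢
  exact hst.trans hv

lemma thresholdSet_subset_supp {t : ℝ} (ht : 0 < t) : thresholdSet f t ⊆ supp f := fun v hv => by
  simp only [thresholdSet, supp, Finset.mem_filter, Finset.mem_univ, true_and] at hv ⊢
  exact (ht.trans_le hv).ne'

lemma phiF_mul_vol_le_cutWeight (hnn : ∀ u v, 0 ≤ w u v) {t : ℝ}
    (hne : (thresholdSet f t).Nonempty) (hproper : thresholdSet f t ≠ Finset.univ)
    (hsmall : vol w (thresholdSet f t) ≤ vol w (thresholdSet f t)ᶜ) :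
    phiF w f * vol w (thresholdSet f t) ≤ cutWeight w (thresholdSet f t) (thresholdSet f t)ᶜ := by
  have hphi : phiF w f ≤ conductance w (thresholdSet f t) :=
    csInf_le ⟨0, fun _ ⟨_, _, _, hx⟩ => hx ▸ conductance_nonneg hnn _⟩ ⟨t, hne, hproper, rfl⟩
  rw [conductance, min_eq_left hsmall] at hphi
  exact mul_le_of_le_div₀ (cutWeight_nonneg hnn _ _) (vol_nonneg hnn _) hphi

/-- `V_f(t)` is the smaller side of its cut because it lies in the support. -/
lemma phiF_mul_vol_le_cutWeight_of_mem_Ioc (hnn : ∀ u v, 0 ≤ w u v)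
    (hsupp : vol w (supp f) ≤ vol w Finset.univ / 2) {b a : ℝ} (hb : 0 ≤ b)
    (hva : 0 < vol w (thresholdSet f a)) {t : ℝ} (ht : t ∈ Set.Ioc b a) :
    phiF w f * vol w (thresholdSet f a) ≤ cutWeight w (thresholdSet f t) (thresholdSet f t)ᶜ := by
  have hsub : thresholdSet f a ⊆ thresholdSet f t := thresholdSet_anti f ht.2
  have hhalf : vol w (thresholdSet f t) ≤ vol w Finset.univ / 2 :=
    (vol_mono hnn (thresholdSet_subset_supp f (hb.trans_lt ht.1))).trans hsupp
  have hpos : 0 < vol w (thresholdSet f t) := hva.trans_le (vol_mono hnn hsub)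
  have hcompl := vol_add_vol_compl (w := w) (thresholdSet f t)
  have hne : (thresholdSet f a).Nonempty := by
    by_contra! h
    simp [h, vol] at hva
  have hproper : thresholdSet f t ≠ Finset.univ := by
    intro h
    rw [h] at hhalf hpos
    linarith
  calc phiF w f * vol w (thresholdSet f a)
      ≤ phiF w f * vol w (thresholdSet f t) :=
        mul_le_mul_of_nonneg_left (vol_mono hnn hsub) (phiF_nonneg f hnn)
    _ ≤ _ := phiF_mul_vol_le_cutWeight f hnn (hne.mono hsub) hproper (by linarith)

lemma cutWeight_thresholdSet (t : ℝ) :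
    cutWeight w (thresholdSet f t) (thresholdSet f t)ᶜ =
      ∑ u, ∑ v, w u v * (Set.Ioc (f v) (f u)).indicator 1 t := by
  simp only [cutWeight, thresholdSet, Finset.compl_filter, Finset.sum_filter]
  refine Finset.sum_congr rfl fun u _ => ?_
  split_ifs with hu
  · refine Finset.sum_congr rfl fun v _ => ?_
    by_cases hv : t ≤ f v
    · simp [hv]
    · simp [hu, hv, lt_of_not_ge hv]
  · simp [hu]

end ThresholdCuts

/-- `len(I ∩ [f u, f v])` for `I = (b, a]`. -/
def edgeOverlap (f : Fin n → ℝ) (b a : ℝ) (u v : Fin n) : ℝ :=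
  overlap b a (min (f u) (f v)) (max (f u) (f v))

def crossingWeight (w : Fin n → Fin n → ℝ) (f : Fin n → ℝ) (b a : ℝ) : ℝ :=
  1 / 2 * ∑ u, ∑ v, if edgeOverlap f b a u v ≠ 0 then w u v else 0

def jumpingWeight (w : Fin n → Fin n → ℝ) (f : Fin n → ℝ) (b a : ℝ) : ℝ :=
  1 / 2 * ∑ u, ∑ v, if min (f u) (f v) ≤ b ∧ a < max (f u) (f v) then w u v else 0

section IntervalEnergy

variable {w : Fin n → Fin n → ℝ} (f : Fin n → ℝ)

lemma edgeOverlap_ne_zero {b a : ℝ} {u v : Fin n} (h : edgeOverlap f b a u v ≠ 0) :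
    (b < f u ∧ f u ≤ a) ∨ (b < f v ∧ f v ≤ a) ∨ (min (f u) (f v) ≤ b ∧ a < max (f u) (f v)) := by
  rcases mem_Ioc_or_mem_Ioc_or_of_overlap_ne_zero h with h | h | h
  · rcases min_choice (f u) (f v) with e | e <;> rw [e] at h
    exacts [Or.inl h, Or.inr (Or.inl h)]
  · rcases max_choice (f u) (f v) with e | e <;> rw [e] at h
    exacts [Or.inl h, Or.inr (Or.inl h)]
  · exact Or.inr (Or.inr h)

lemma intervalEnergy_eq_sum_edgeOverlap_sq (b a : ℝ) :
    intervalEnergy w f b a = 1 / 2 * ∑ u, ∑ v, w u v * edgeOverlap f b a u v ^ 2 := rfl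

lemma intervalEnergy_nonneg (hnn : ∀ u v, 0 ≤ w u v) (b a : ℝ) : 0 ≤ intervalEnergy w f b a :=
  mul_nonneg (by norm_num) <| Finset.sum_nonneg fun u _ => Finset.sum_nonneg fun v _ =>
    mul_nonneg (hnn u v) (sq_nonneg _)

/-- Coarea formula for the threshold cuts of `f`. -/
lemma integral_cutWeight_thresholdSet (hsym : ∀ u v, w u v = w v u) (b a : ℝ) :
    ∫ t in Set.Ioc b a, cutWeight w (thresholdSet f t) (thresholdSet f t)ᶜ =
      1 / 2 * ∑ u, ∑ v, w u v * edgeOverlap f b a u v := by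
  have hint (u v : Fin n) := (integrable_indicator_one_Ioc b a (f v) (f u)).const_mul (w u v)
  simp_rw [cutWeight_thresholdSet]
  rw [integral_finsetSum _ fun u _ => integrable_finsetSum _ fun v _ => hint u v]
  simp_rw [integral_finsetSum _ fun v _ => hint _ v, integral_const_mul,
    setIntegral_indicator_one_Ioc]
  calc ∑ u, ∑ v, w u v * overlap b a (f v) (f u)
      = 1 / 2 * (∑ u, ∑ v, w u v * overlap b a (f u) (f v) +
          ∑ u, ∑ v, w u v * overlap b a (f v) (f u)) := by
        rw [sum_sum_mul_swap hsym fun u v => overlap b a (f u) (f v)]; ring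
    _ = _ := by simp only [← Finset.sum_add_distrib, ← mul_add, overlap_add_overlap_swap]; rfl

lemma mul_sub_le_sum_edgeOverlap (hsym : ∀ u v, w u v = w v u) {b a c : ℝ} (hba : b ≤ a)
    (hcut : ∀ t ∈ Set.Ioc b a, c ≤ cutWeight w (thresholdSet f t) (thresholdSet f t)ᶜ) :
    c * (a - b) ≤ 1 / 2 * ∑ u, ∑ v, w u v * edgeOverlap f b a u v := by
  have hint : Integrable (fun t => cutWeight w (thresholdSet f t) (thresholdSet f t)ᶜ)
      (volume.restrict (Set.Ioc b a)) := by
    simp_rw [cutWeight_thresholdSet]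
    exact integrable_finsetSum _ fun u _ => integrable_finsetSum _ fun v _ =>
      (integrable_indicator_one_Ioc b a (f v) (f u)).const_mul (w u v)
  rw [← integral_cutWeight_thresholdSet f hsym]
  calc c * (a - b) = ∫ _ in Set.Ioc b a, c := by
        rw [setIntegral_const, Real.volume_real_Ioc, max_eq_left (sub_nonneg.mpr hba),
          smul_eq_mul, mul_comm]
    _ ≤ _ := setIntegral_mono_on (integrable_const c) hint measurableSet_Ioc hcut

lemma sq_sum_edgeOverlap_le (hnn : ∀ u v, 0 ≤ w u v) (b a : ℝ) :
    (1 / 2 * ∑ u, ∑ v, w u v * edgeOverlap f b a u v) ^ 2 ≤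
      intervalEnergy w f b a * crossingWeight w f b a := by
  have hCS := sq_sum_mul_le_sum_mul_sq_mul_sum (Finset.univ : Finset (Fin n × Fin n))
    (w := fun p => w p.1 p.2) (x := fun p => edgeOverlap f b a p.1 p.2) fun p _ => hnn p.1 p.2
  simp only [Finset.sum_filter, Fintype.sum_prod_type] at hCS
  rw [intervalEnergy_eq_sum_edgeOverlap_sq, crossingWeight]
  linarith [mul_le_mul_of_nonneg_left hCS (by norm_num : (0 : ℝ) ≤ 1 / 4)]

lemma crossingWeight_le (hsym : ∀ u v, w u v = w v u) (hnn : ∀ u v, 0 ≤ w u v) (b a : ℝ) :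
    crossingWeight w f b a ≤
      vol w (Finset.univ.filter fun v => b < f v ∧ f v ≤ a) + jumpingWeight w f b a := by
  have hvol : vol w (Finset.univ.filter fun v => b < f v ∧ f v ≤ a) =
      ∑ u, ∑ v, if b < f u ∧ f u ≤ a then w u v else 0 := by
    simp only [vol, deg, Finset.sum_filter, Finset.sum_ite_irrel, Finset.sum_const_zero]
  have hvol' : vol w (Finset.univ.filter fun v => b < f v ∧ f v ≤ a) =
      ∑ u, ∑ v, if b < f v ∧ f v ≤ a then w u v else 0 := by
    rw [hvol, Finset.sum_comm]
    exact Finset.sum_congr rfl fun u _ => Finset.sum_congr rfl fun v _ => by rw [hsym]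
  have hpt (u v : Fin n) : (if edgeOverlap f b a u v ≠ 0 then w u v else 0) ≤
      (if b < f u ∧ f u ≤ a then w u v else 0) + (if b < f v ∧ f v ≤ a then w u v else 0) +
        if min (f u) (f v) ≤ b ∧ a < max (f u) (f v) then w u v else 0 := by
    have hw := hnn u v
    by_cases h : edgeOverlap f b a u v ≠ 0
    · rw [if_pos h]
      exact le_ite_add_ite_add_ite hw (edgeOverlap_ne_zero f h)
    · rw [if_neg h]
      exact add_nonneg (add_nonneg (ite_nonneg hw le_rfl) (ite_nonneg hw le_rfl))
        (ite_nonneg hw le_rfl)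
  calc crossingWeight w f b a
      ≤ 1 / 2 * ∑ u, ∑ v, ((if b < f u ∧ f u ≤ a then w u v else 0) +
          (if b < f v ∧ f v ≤ a then w u v else 0) +
            if min (f u) (f v) ≤ b ∧ a < max (f u) (f v) then w u v else 0) := by
        unfold crossingWeight
        gcongr with u _ v _
        exact hpt u v
    _ = _ := by
        simp only [Finset.sum_add_distrib, jumpingWeight]
        rw [← hvol, ← hvol']
        ring

lemma jumpingWeight_mul_sq_le_intervalEnergy (hnn : ∀ u v, 0 ≤ w u v) {b a : ℝ} (hba : b ≤ a) :
    jumpingWeight w f b a * (a - b) ^ 2 ≤ intervalEnergy w f b a := by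
  rw [jumpingWeight, intervalEnergy_eq_sum_edgeOverlap_sq, mul_assoc, Finset.sum_mul]
  refine mul_le_mul_of_nonneg_left (Finset.sum_le_sum fun u _ => ?_) (by norm_num)
  rw [Finset.sum_mul]
  refine Finset.sum_le_sum fun v _ => ?_
  split_ifs with h
  · rw [edgeOverlap, overlap_eq_sub hba h.1 h.2]
  · simpa using mul_nonneg (hnn u v) (sq_nonneg _)

end IntervalEnergy

lemma sq_mul_sq_div_le {c L T E W M A : ℝ} (hc : 0 ≤ c) (hL : 0 ≤ L) (hM : 0 ≤ M) (hE : 0 ≤ E)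
    (hT : c * L ≤ T) (hCS : T ^ 2 ≤ E * W) (hW : W ≤ M + A) (hA : A * L ^ 2 ≤ E) :
    c ^ 2 * L ^ 2 / (c + M) ≤ E := by
  refine div_le_of_le_mul₀ (add_nonneg hc hM) hE ?_
  rcases le_or_gt c A with hcA | hAc
  · calc c ^ 2 * L ^ 2 = c * (c * L ^ 2) := by ring
      _ ≤ c * E :=
        mul_le_mul_of_nonneg_left ((mul_le_mul_of_nonneg_right hcA (sq_nonneg L)).trans hA) hc
      _ ≤ E * (c + M) := by nlinarith
  · calc c ^ 2 * L ^ 2 = (c * L) ^ 2 := by ring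
      _ ≤ T ^ 2 := pow_le_pow_left₀ (mul_nonneg hc hL) hT 2
      _ ≤ E * W := hCS
      _ ≤ E * (c + M) := mul_le_mul_of_nonneg_left (by linarith) hE

theorem energy_lower_bound_general
    (w : Fin n → Fin n → ℝ)
    (hsym : ∀ u v, w u v = w v u) (hnn : ∀ u v, 0 ≤ w u v)
    (f : Fin n → ℝ)
    (hsupp : vol w (supp f) ≤ vol w Finset.univ / 2)
    (a b : ℝ) (hb : 0 ≤ b) (hab : b < a)
    (hva : 0 < vol w (thresholdSet f a)) :
    phiF w f ^ 2 * vol w (thresholdSet f a) ^ 2 * (a - b) ^ 2 /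
        (phiF w f * vol w (thresholdSet f a) +
          vol w (Finset.univ.filter fun v => b < f v ∧ f v ≤ a))
      ≤ intervalEnergy w f b a := by
  have hcut (t : ℝ) (ht : t ∈ Set.Ioc b a) :=
    phiF_mul_vol_le_cutWeight_of_mem_Ioc f hnn hsupp hb hva ht
  have key := sq_mul_sq_div_le (mul_nonneg (phiF_nonneg f hnn) hva.le) (sub_nonneg.mpr hab.le)
    (vol_nonneg hnn _) (intervalEnergy_nonneg f hnn b a)
    (mul_sub_le_sum_edgeOverlap f hsym hab.le hcut) (sq_sum_edgeOverlap_le f hnn b a)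
    (crossingWeight_le f hsym hnn b a) (jumpingWeight_mul_sq_le_intervalEnergy f hnn hab.le)
  rwa [mul_pow] at key

/-- Energy lower bound on an interval `I = (b,a]`:
`𝓔_f(I) ≥ φ(f)²·vol_f(a)²·len(I)² / (φ(f)·vol_f(a) + vol_f(I))`. -/
theorem energy_lower_bound
    (hn : 2 ≤ n) (w : Fin n → Fin n → ℝ)
    (hsym : ∀ u v, w u v = w v u) (hnn : ∀ u v, 0 ≤ w u v)
    (hloop : ∀ v, w v v = 0) (hdeg : ∀ v, 1 ≤ deg w v)
    (f : Fin n → ℝ) (hfnn : ∀ v, 0 ≤ f v)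
    (hsupp : vol w (supp f) ≤ vol w Finset.univ / 2)
    (a b : ℝ) (hb : 0 ≤ b) (hab : b < a)
    (hva : 0 < vol w (thresholdSet f a)) :
    phiF w f ^ 2 * vol w (thresholdSet f a) ^ 2 * (a - b) ^ 2 /
        (phiF w f * vol w (thresholdSet f a) +
          vol w (Finset.univ.filter fun v => b < f v ∧ f v ≤ a))
      ≤ intervalEnergy w f b a :=
  energy_lower_bound_general w hsym hnn f hsupp a b hb hab hva

end

end CheegerHigher
end

section
/- Let U ⊆ V, let H = (U, E(U)) be the induced subgraph of G on U (with the same edge weights), and let f : V → ℝ be a nonzero nonnegative function with f(v) = 0 for all v ∉ U and with Σ_{v ∈ U} w_H(v)·f(v)² > 0, where w_H(v) is the weighted degree of v in H. Suppose that for every t > 0 with V_f(t) nonempty, w(E(V_f(t), V∖U)) ≤ w(E(V_f(t), U∖V_f(t))). Then √(8·R_H(f|_U)) ≥ R_G(f), where R_H is the Rayleigh quotient computed in H and R_G the Rayleigh quotient computed in G. -/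
open scoped Classical

namespace CheegerHigher

noncomputable section

variable {n : ℕ}

/-!
Let `E`, `N` be the energy and squared norm of `f` in `H`, and `C = ∑_v f(v)² w(v, V∖U)`.
Since `f` vanishes off `U`, passing from `H` to `G` adds exactly `C` to both, so
`R_G(f) = (E + C) / (N + C)`. Peeling off the levels of `f²` one at a time (a discrete coarea
argument), the threshold hypothesis gives `C ≤ ∑_{u,v} w_H(u,v) (f(u)² - f(v)²)⁺`, and by
Cauchy–Schwarz the square of that sum is at most `4 E E⁺ ≤ 8 E N`, where `E + E⁺ = 2N` with
`E⁺` the signless energy. The bounds `C ≤ √(8EN)` and `E ≤ 2N` then give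
`(E + C) / (N + C) ≤ √(8E/N)` by elementary algebra.
-/

theorem inducedW_nonneg {w : Fin n → Fin n → ℝ} (hnn : ∀ u v, 0 ≤ w u v) (U : Finset (Fin n))
    (u v : Fin n) : 0 ≤ inducedW w U u v := by
  unfold inducedW; split_ifs <;> simp [hnn]

theorem inducedW_le {w : Fin n → Fin n → ℝ} (hnn : ∀ u v, 0 ≤ w u v) (U : Finset (Fin n))
    (u v : Fin n) : inducedW w U u v ≤ w u v := by
  unfold inducedW; split_ifs <;> simp [hnn]

theorem inducedW_symm {w : Fin n → Fin n → ℝ} (hsym : ∀ u v, w u v = w v u) (U : Finset (Fin n))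
    (u v : Fin n) : inducedW w U u v = inducedW w U v u := by
  simp only [inducedW, and_comm, hsym u v]

theorem deg_sub_deg_inducedW (w : Fin n → Fin n → ℝ) {U : Finset (Fin n)} {v : Fin n}
    (hv : v ∈ U) : deg w v - deg (inducedW w U) v = ∑ u ∈ Uᶜ, w v u := by
  simp only [deg, inducedW, hv, true_and, ← Finset.sum_filter, Finset.filter_mem_eq_inter,
    Finset.univ_inter]
  linarith [Finset.sum_compl_add_sum U (w v)]

theorem cutWeight_inducedW (w : Fin n → Fin n → ℝ) {U S : Finset (Fin n)} (hS : S ⊆ U)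
    (T : Finset (Fin n)) : cutWeight (inducedW w U) S T = cutWeight w S (U ∩ T) := by
  refine Finset.sum_congr rfl fun u hu => ?_
  simp only [inducedW, hS hu, true_and, ← Finset.sum_filter, Finset.filter_mem_eq_inter,
    Finset.inter_comm]

theorem sum_sum_mul_sq_left (w : Fin n → Fin n → ℝ) (f : Fin n → ℝ) :
    ∑ u, ∑ v, w u v * f u ^ 2 = normWsq w f := by
  simp only [normWsq, deg, Finset.sum_mul]

theorem sum_sum_mul_sq_right {w : Fin n → Fin n → ℝ} (hsym : ∀ u v, w u v = w v u)
    (f : Fin n → ℝ) : ∑ u, ∑ v, w u v * f v ^ 2 = normWsq w f := by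
  rw [Finset.sum_comm, ← sum_sum_mul_sq_left]
  simp only [hsym]

theorem energy_nonneg {w : Fin n → Fin n → ℝ} (hnn : ∀ u v, 0 ≤ w u v) (f : Fin n → ℝ) :
    0 ≤ energy w f :=
  mul_nonneg (by norm_num) <| Finset.sum_nonneg fun u _ => Finset.sum_nonneg fun v _ =>
    mul_nonneg (hnn u v) (sq_nonneg _)

theorem signEnergy_nonneg {w : Fin n → Fin n → ℝ} (hnn : ∀ u v, 0 ≤ w u v) (f : Fin n → ℝ) :
    0 ≤ signEnergy w f :=
  mul_nonneg (by norm_num) <| Finset.sum_nonneg fun u _ => Finset.sum_nonneg fun v _ =>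
    mul_nonneg (hnn u v) (sq_nonneg _)

theorem energy_add_signEnergy {w : Fin n → Fin n → ℝ} (hsym : ∀ u v, w u v = w v u)
    (f : Fin n → ℝ) : energy w f + signEnergy w f = 2 * normWsq w f := by
  have hpt : ∀ u v, w u v * (f u - f v) ^ 2 + w u v * (f u + f v) ^ 2 =
      2 * (w u v * f u ^ 2) + 2 * (w u v * f v ^ 2) := fun u v => by ring
  rw [energy, signEnergy, ← mul_add, ← Finset.sum_add_distrib]
  simp_rw [← Finset.sum_add_distrib, hpt, Finset.sum_add_distrib, ← Finset.mul_sum,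
    sum_sum_mul_sq_left, sum_sum_mul_sq_right hsym]
  ring

theorem sq_sum_mul_posPart_sq_sub_le {w : Fin n → Fin n → ℝ} (hnn : ∀ u v, 0 ≤ w u v)
    (f : Fin n → ℝ) :
    (∑ u, ∑ v, w u v * max 0 (f u ^ 2 - f v ^ 2)) ^ 2 ≤ 4 * energy w f * signEnergy w f := by
  have hpt (u v : Fin n) : (w u v * max 0 (f u ^ 2 - f v ^ 2)) ^ 2 ≤
      w u v * (f u - f v) ^ 2 * (w u v * (f u + f v) ^ 2) := by
    have : max 0 (f u ^ 2 - f v ^ 2) ^ 2 ≤ (f u ^ 2 - f v ^ 2) ^ 2 := sq_le_sq.2 <| by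
      rw [abs_of_nonneg (le_max_left _ _)]
      exact max_le (abs_nonneg _) (le_abs_self _)
    calc (w u v * max 0 (f u ^ 2 - f v ^ 2)) ^ 2
        = w u v ^ 2 * max 0 (f u ^ 2 - f v ^ 2) ^ 2 := mul_pow _ _ _
      _ ≤ w u v ^ 2 * (f u ^ 2 - f v ^ 2) ^ 2 := by gcongr
      _ = _ := by ring
  have hcs := Finset.sum_sq_le_sum_mul_sum_of_sq_le_mul Finset.univ
    (r := fun p : Fin n × Fin n => w p.1 p.2 * max 0 (f p.1 ^ 2 - f p.2 ^ 2))
    (fun p _ => mul_nonneg (hnn p.1 p.2) (sq_nonneg (f p.1 - f p.2)))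
    (fun p _ => mul_nonneg (hnn p.1 p.2) (sq_nonneg (f p.1 + f p.2))) (fun p _ => hpt p.1 p.2)
  simp only [Fintype.sum_prod_type] at hcs
  calc _ ≤ _ := hcs
    _ = _ := by simp only [energy, signEnergy]; ring

/-- For `f` supported on `U` this is `∑_{v ∈ U} f(v)² w(E({v}, V∖U))`. -/
def boundaryMass (w : Fin n → Fin n → ℝ) (U : Finset (Fin n)) (f : Fin n → ℝ) : ℝ :=
  ∑ v, (deg w v - deg (inducedW w U) v) * f v ^ 2

theorem boundaryMass_nonneg {w : Fin n → Fin n → ℝ} (hnn : ∀ u v, 0 ≤ w u v)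
    (U : Finset (Fin n)) (f : Fin n → ℝ) : 0 ≤ boundaryMass w U f :=
  Finset.sum_nonneg fun v _ => mul_nonneg (sub_nonneg.2 <| Finset.sum_le_sum fun u _ =>
    inducedW_le hnn U v u) (sq_nonneg _)

theorem normWsq_eq_normWsq_inducedW_add (w : Fin n → Fin n → ℝ) (U : Finset (Fin n))
    (f : Fin n → ℝ) : normWsq w f = normWsq (inducedW w U) f + boundaryMass w U f := by
  rw [normWsq, normWsq, boundaryMass, ← Finset.sum_add_distrib]
  exact Finset.sum_congr rfl fun v _ => by ring

theorem energy_eq_energy_inducedW_add {w : Fin n → Fin n → ℝ} (hsym : ∀ u v, w u v = w v u)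
    {U : Finset (Fin n)} {f : Fin n → ℝ} (hfU : ∀ v, v ∉ U → f v = 0) :
    energy w f = energy (inducedW w U) f + boundaryMass w U f := by
  set w' := inducedW w U
  -- off `U × U` one endpoint carries `f = 0`, so the cross term of `(f u - f v)²` vanishes
  have hpt (u v : Fin n) : w u v * (f u - f v) ^ 2 = w' u v * (f u - f v) ^ 2 +
      (w u v * f u ^ 2 - w' u v * f u ^ 2) + (w u v * f v ^ 2 - w' u v * f v ^ 2) := by
    by_cases h : u ∈ U ∧ v ∈ U
    · simp only [w', inducedW, if_pos h]; ring
    · have hfuv : f u * f v = 0 := by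
        rcases not_and_or.1 h with h | h <;> simp [hfU _ h]
      simp only [w', inducedW, if_neg h]
      linear_combination (-2 * w u v) * hfuv
  have hw'sym : ∀ u v, w' u v = w' v u := inducedW_symm hsym U
  have hsplit := normWsq_eq_normWsq_inducedW_add w U f
  simp only [energy, hpt, Finset.sum_add_distrib, Finset.sum_sub_distrib, sum_sum_mul_sq_left,
    sum_sum_mul_sq_right hsym, sum_sum_mul_sq_right hw'sym]
  linarith

theorem thresholdSet_max_zero_sub (h : Fin n → ℝ) (s : ℝ) {t : ℝ} (ht : 0 < t) :
    thresholdSet (fun v => max 0 (h v - s)) t = thresholdSet h (t + s) := by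
  ext v
  simp only [thresholdSet, Finset.mem_filter, Finset.mem_univ, true_and, le_max_iff,
    or_iff_right (not_le.2 ht), le_sub_iff_add_le]

section Gap

variable {h : Fin n → ℝ} {s : ℝ}

theorem sum_mul_eq_of_gap (a : Fin n → ℝ) (hs : 0 < s) (hgap : ∀ v, h v = 0 ∨ s ≤ h v) :
    ∑ v, a v * h v = ∑ v, a v * max 0 (h v - s) + s * ∑ v ∈ thresholdSet h s, a v := by
  rw [thresholdSet, Finset.sum_filter, Finset.mul_sum, ← Finset.sum_add_distrib]
  refine Finset.sum_congr rfl fun v _ => ?_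
  rcases hgap v with hv | hv
  · simp [hv, not_le.2 hs, hs.le]
  · rw [if_pos hv, max_eq_right (sub_nonneg.2 hv)]; ring

theorem sum_sum_mul_posPart_sub_eq_of_gap (b : Fin n → Fin n → ℝ) (hs : 0 < s)
    (hgap : ∀ v, h v = 0 ∨ s ≤ h v) :
    ∑ u, ∑ v, b u v * max 0 (h u - h v) =
      ∑ u, ∑ v, b u v * max 0 (max 0 (h u - s) - max 0 (h v - s)) +
        s * cutWeight b (thresholdSet h s) (thresholdSet h s)ᶜ := by
  have hh v : 0 ≤ h v := (hgap v).elim (fun hv => hv.ge) (fun hv => hs.le.trans hv)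
  rw [cutWeight, thresholdSet, Finset.compl_filter, Finset.sum_filter, Finset.mul_sum,
    ← Finset.sum_add_distrib]
  refine Finset.sum_congr rfl fun u _ => ?_
  rcases hgap u with hu | hu
  · rw [if_neg (by linarith), mul_zero, add_zero]
    refine Finset.sum_congr rfl fun v _ => ?_
    rw [hu, max_eq_left (by linarith : (0:ℝ) - s ≤ 0), max_eq_left (by linarith [hh v]),
      max_eq_left (by linarith [le_max_left 0 (h v - s)])]
  · rw [if_pos hu, Finset.sum_filter, Finset.mul_sum, ← Finset.sum_add_distrib]
    refine Finset.sum_congr rfl fun v _ => ?_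
    rcases hgap v with hv | hv
    · rw [if_pos (by linarith), hv, max_eq_left (by linarith : (0:ℝ) - s ≤ 0),
        max_eq_right (sub_nonneg.2 hu), max_eq_right (by linarith), max_eq_right (by linarith)]
      ring
    · rw [if_neg (not_not.2 hv), max_eq_right (sub_nonneg.2 hu), max_eq_right (sub_nonneg.2 hv)]
      ring_nf

end Gap

theorem sum_mul_le_sum_sum_mul_posPart_sub (a : Fin n → ℝ) (b : Fin n → Fin n → ℝ)
    {h : Fin n → ℝ} (hh : ∀ v, 0 ≤ h v)
    (hcut : ∀ t, 0 < t →
      ∑ v ∈ thresholdSet h t, a v ≤ cutWeight b (thresholdSet h t) (thresholdSet h t)ᶜ) :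
    ∑ v, a v * h v ≤ ∑ u, ∑ v, b u v * max 0 (h u - h v) := by
  induction hk : (Finset.univ.filter fun v => 0 < h v).card using Nat.strong_induction_on
    generalizing h with
  | _ k ih =>
  set P := Finset.univ.filter fun v => 0 < h v
  rcases P.eq_empty_or_nonempty with hP | hP
  · have h0 v : h v = 0 := (hh v).eq_or_lt.elim Eq.symm fun hv =>
      absurd (Finset.mem_filter.2 ⟨Finset.mem_univ v, hv⟩) (hP ▸ Finset.notMem_empty v)
    simp [h0]
  -- peel off the layer `h ≥ s` of the smallest positive value `s`, which shrinks the support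
  set s := P.inf' hP h
  have hs : 0 < s := (Finset.lt_inf'_iff hP).2 fun v hv => (Finset.mem_filter.1 hv).2
  have hgap v : h v = 0 ∨ s ≤ h v := (hh v).eq_or_lt.imp Eq.symm fun hv =>
    Finset.inf'_le h (Finset.mem_filter.2 ⟨Finset.mem_univ v, hv⟩)
  obtain ⟨v₀, hv₀P, hv₀⟩ := Finset.exists_mem_eq_inf' hP h
  set g := fun v => max 0 (h v - s)
  have hcard : (Finset.univ.filter fun v => 0 < g v).card < k := by
    rw [← hk]
    refine Finset.card_lt_card <| (Finset.ssubset_iff_of_subset fun v hv => ?_).2 ⟨v₀, hv₀P, ?_⟩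
    · simp only [g, Finset.mem_filter, Finset.mem_univ, true_and, lt_max_iff, lt_irrefl,
        false_or] at hv
      exact Finset.mem_filter.2 ⟨Finset.mem_univ v, by linarith⟩
    · simp only [g, Finset.mem_filter, Finset.mem_univ, true_and,
        show h v₀ - s = 0 from sub_eq_zero.2 hv₀.symm, max_self, lt_irrefl, not_false_eq_true]
  have hg_cut (t : ℝ) (ht : 0 < t) :
      ∑ v ∈ thresholdSet g t, a v ≤ cutWeight b (thresholdSet g t) (thresholdSet g t)ᶜ := by
    rw [show thresholdSet g t = _ from thresholdSet_max_zero_sub h s ht]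
    exact hcut (t + s) (by linarith)
  calc ∑ v, a v * h v = ∑ v, a v * g v + s * ∑ v ∈ thresholdSet h s, a v :=
        sum_mul_eq_of_gap a hs hgap
    _ ≤ ∑ u, ∑ v, b u v * max 0 (g u - g v) +
          s * cutWeight b (thresholdSet h s) (thresholdSet h s)ᶜ :=
        add_le_add (ih _ hcard (fun v => le_max_left _ _) hg_cut rfl)
          (mul_le_mul_of_nonneg_left (hcut s hs) hs.le)
    _ = ∑ u, ∑ v, b u v * max 0 (h u - h v) :=
        (sum_sum_mul_posPart_sub_eq_of_gap b hs hgap).symm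

theorem thresholdSet_sq {f : Fin n → ℝ} (hf : ∀ v, 0 ≤ f v) (t : ℝ) :
    thresholdSet (fun v => f v ^ 2) t = thresholdSet f √t := by
  ext v
  simp only [thresholdSet, Finset.mem_filter, Finset.mem_univ, true_and, Real.sqrt_le_left (hf v)]

theorem boundaryMass_le_sum_sum_mul_posPart_sq_sub {w : Fin n → Fin n → ℝ} {U : Finset (Fin n)}
    {f : Fin n → ℝ} (hfnn : ∀ v, 0 ≤ f v) (hfU : ∀ v, v ∉ U → f v = 0)
    (hcut : ∀ t : ℝ, 0 < t → (thresholdSet f t).Nonempty →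
      cutWeight w (thresholdSet f t) Uᶜ ≤
        cutWeight w (thresholdSet f t) (U \ thresholdSet f t)) :
    boundaryMass w U f ≤ ∑ u, ∑ v, inducedW w U u v * max 0 (f u ^ 2 - f v ^ 2) := by
  refine sum_mul_le_sum_sum_mul_posPart_sub _ _ (h := fun v => f v ^ 2)
    (fun v => sq_nonneg _) fun t ht => ?_
  rw [thresholdSet_sq hfnn]
  set S := thresholdSet f √t
  rcases S.eq_empty_or_nonempty with hS | hS
  · simp [hS, cutWeight]
  have hSU : S ⊆ U := fun v hv => by
    by_contra hvU
    have : √t ≤ f v := (Finset.mem_filter.1 hv).2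
    linarith [Real.sqrt_pos.2 ht, hfU v hvU]
  rw [Finset.sum_congr rfl fun v hv => deg_sub_deg_inducedW w (hSU hv), cutWeight_inducedW w hSU,
    ← Finset.sdiff_eq_inter_compl]
  exact hcut _ (Real.sqrt_pos.2 ht) hS

theorem add_div_add_le_sqrt {E N C : ℝ} (hN : 0 < N) (hE : 0 ≤ E) (hEN : E ≤ 2 * N)
    (hC : 0 ≤ C) (hCsq : C ^ 2 ≤ 8 * E * N) : (E + C) / (N + C) ≤ √(8 * (E / N)) := by
  set T := √(8 * (E / N))
  have hT : 0 ≤ T := Real.sqrt_nonneg _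
  have hTsq : T ^ 2 * N = 8 * E := by
    rw [Real.sq_sqrt (by positivity)]
    field_simp
  have hCT : C ≤ T * N := by nlinarith [mul_nonneg hT hN.le]
  rw [div_le_iff₀ (by linarith)]
  rcases le_total 1 T with hT1 | hT1
  · nlinarith
  · nlinarith [mul_le_mul_of_nonneg_left hCT (sub_nonneg.2 hT1)]

theorem rayleigh_enlargement_general
    (w : Fin n → Fin n → ℝ)
    (hsym : ∀ u v, w u v = w v u) (hnn : ∀ u v, 0 ≤ w u v)
    (U : Finset (Fin n)) (f : Fin n → ℝ) (hfnn : ∀ v, 0 ≤ f v)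
    (hfU : ∀ v, v ∉ U → f v = 0)
    (hpos : 0 < normWsq (inducedW w U) f)
    (hcut : ∀ t : ℝ, 0 < t → (thresholdSet f t).Nonempty →
      cutWeight w (thresholdSet f t) Uᶜ ≤
        cutWeight w (thresholdSet f t) (U \ thresholdSet f t)) :
    rayleigh w f ≤ Real.sqrt (8 * rayleigh (inducedW w U) f) := by
  have hnn' := inducedW_nonneg hnn U
  have hE := energy_nonneg hnn' f
  have hS := signEnergy_nonneg hnn' f
  have hES := energy_add_signEnergy (inducedW_symm hsym U) f
  have hC := boundaryMass_nonneg hnn U f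
  have hCK := boundaryMass_le_sum_sum_mul_posPart_sq_sub hfnn hfU hcut
  have hK := sq_sum_mul_posPart_sq_sub_le hnn' f
  rw [rayleigh, rayleigh, energy_eq_energy_inducedW_add hsym hfU,
    normWsq_eq_normWsq_inducedW_add w U]
  refine add_div_add_le_sqrt hpos hE (by linarith) hC ?_
  calc boundaryMass w U f ^ 2 ≤ (∑ u, ∑ v, inducedW w U u v * max 0 (f u ^ 2 - f v ^ 2)) ^ 2 :=
        pow_le_pow_left₀ hC hCK 2
    _ ≤ 4 * energy (inducedW w U) f * signEnergy (inducedW w U) f := hK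
    _ ≤ 8 * energy (inducedW w U) f * normWsq (inducedW w U) f := by nlinarith

/-- If every nonempty threshold set of `f` has at most as much
edge weight to `V∖U` as within `U` to its complement in `U`, then
`√(8·R_H(f)) ≥ R_G(f)` for the induced subgraph `H` on `U`. -/
theorem rayleigh_enlargement
    (hn : 2 ≤ n) (w : Fin n → Fin n → ℝ)
    (hsym : ∀ u v, w u v = w v u) (hnn : ∀ u v, 0 ≤ w u v)
    (hloop : ∀ v, w v v = 0) (hdeg : ∀ v, 1 ≤ deg w v)
    (U : Finset (Fin n)) (f : Fin n → ℝ) (hf0 : f ≠ 0) (hfnn : ∀ v, 0 ≤ f v)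
    (hfU : ∀ v, v ∉ U → f v = 0)
    (hpos : 0 < normWsq (inducedW w U) f)
    (hcut : ∀ t : ℝ, 0 < t → (thresholdSet f t).Nonempty →
      cutWeight w (thresholdSet f t) Uᶜ ≤
        cutWeight w (thresholdSet f t) (U \ thresholdSet f t)) :
    rayleigh w f ≤ Real.sqrt (8 * rayleigh (inducedW w U) f) :=
  rayleigh_enlargement_general w hsym hnn U f hfnn hfU hpos hcut

end

end CheegerHigher
end
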